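/- arXiv:1909.09262 — 3 statements merged into one kernel-verified Lean document; each statement's English description precedes it below -/
import Mathlib

section
/- The map ψ : G ×_P 𝒫 → 𝒴′ sending the class [g, p(w⁻¹Qw ∩ P), p̂(ŵ⁻¹Q̂ŵ ∩ P̂)] to the triple (gpw⁻¹Q, gp̂ŵ⁻¹Q̂, gP̂) is a well-defined bijection. -/
/-!
STATEMENT 0: Let `Ghat` be a group with subgroups `G, Phat, Qhat ≤ Ghat`, `P = G ∩ Phat`, `Q ≤ G`,
and fixed `w ∈ G`, `what ∈ Ghat`.  With `G ×_P 𝒫` the quotient of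
`G × (P/(w⁻¹Qw ∩ P)) × (Phat/(what⁻¹Qhatwhat ∩ Phat))` by the `P`-action
`p·(g, x, xhat) = (gp⁻¹, px, pxhat)`, and `𝒴′ ⊆ (G/Q) × (Ghat/Qhat) × (Ghat/Phat)` the set of
triples `(gQ, ghatQhat, zPhat)` with `z ∈ gQwPhat` and `z ∈ ghatQhatwhatPhat`:
the map `ψ : G ×_P 𝒫 → 𝒴′`,
`[g, p(w⁻¹Qw ∩ P), phat(what⁻¹Qhatwhat ∩ Phat)] ↦ (gpw⁻¹Q, gphatwhat⁻¹Qhat, gPhat)`,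
is a well-defined bijection.
-/

namespace Stmt0

variable {Ghat : Type*} [Group Ghat]

/-- Triples `(g, x, xhat)` with `g ∈ G`, `x ∈ P = G ⊓ Phat`, `xhat ∈ Phat`; such a triple
represents the point `[g, x·(w⁻¹Qw ∩ P), xhat·(what⁻¹Qhatwhat ∩ Phat)]` of `G ×_P 𝒫`. -/
abbrev Dom (G Phat : Subgroup Ghat) : Type _ :=
  {t : Ghat × Ghat × Ghat // t.1 ∈ G ∧ t.2.1 ∈ G ⊓ Phat ∧ t.2.2 ∈ Phat}

/-- Two triples represent the same point of `G ×_P 𝒫` iff they differ by the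
`P`-action `p·(g, x, xhat) = (gp⁻¹, px, pxhat)` combined with the right-coset ambiguity by
`w⁻¹Qw ∩ P` and `what⁻¹Qhatwhat ∩ Phat`; so `G ×_P 𝒫 = Quot (domRel G Phat Qhat Q w what)`. -/
def domRel (G Phat Qhat Q : Subgroup Ghat) (w what : Ghat) (a b : Dom G Phat) : Prop :=
  ∃ p ∈ G ⊓ Phat, ∃ q, (q ∈ G ⊓ Phat ∧ w * q * w⁻¹ ∈ Q) ∧
    ∃ qhat, (qhat ∈ Phat ∧ what * qhat * what⁻¹ ∈ Qhat) ∧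
      b.1.1 = a.1.1 * p⁻¹ ∧ b.1.2.1 = p * a.1.2.1 * q ∧ b.1.2.2 = p * a.1.2.2 * qhat

/-- Triples `(g, ghat, z)` with `g ∈ G`, `z ∈ gQwPhat` and `z ∈ ghatQhatwhatPhat`, representing the
point `(gQ, ghatQhat, zPhat)` of `𝒴′` (the defining conditions do not depend on the chosen
coset representatives). -/
abbrev Cod (G Phat Qhat Q : Subgroup Ghat) (w what : Ghat) : Type _ :=
  {t : Ghat × Ghat × Ghat // t.1 ∈ G ∧
    (∃ q ∈ Q, ∃ p ∈ Phat, t.2.2 = t.1 * q * w * p) ∧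
    (∃ qhat ∈ Qhat, ∃ phat ∈ Phat, t.2.2 = t.2.1 * qhat * what * phat)}

/-- Two triples represent the same point of `𝒴′` iff the components differ on the right
by elements of `Q`, `Qhat`, `Phat` respectively; so `𝒴′ = Quot (codRel G Phat Qhat Q w what)`. -/
def codRel (G Phat Qhat Q : Subgroup Ghat) (w what : Ghat) (a b : Cod G Phat Qhat Q w what) : Prop :=
  ∃ q ∈ Q, ∃ qhat ∈ Qhat, ∃ p ∈ Phat,
    b.1.1 = a.1.1 * q ∧ b.1.2.1 = a.1.2.1 * qhat ∧ b.1.2.2 = a.1.2.2 * p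

/-!
`ψ` is induced by the representative map `(g, x, x̂) ↦ (gxw⁻¹, gx̂ŵ⁻¹, g)`. If two images are
related, their third components give `g' = gp` with `p = g⁻¹g' ∈ G ∩ P̂ = P`, and then the first two
components say exactly that `x' ∈ p⁻¹x(w⁻¹Qw)` and `x̂' ∈ p⁻¹x̂(ŵ⁻¹Q̂ŵ)`, the conjugated elements lying
in `P` resp. `P̂` because `x, x', x̂, x̂'` do. A triple `(g, ĝ, z)` with `z = gqwp = ĝq̂ŵp̂` is the
image of `[gqw, 1, pp̂⁻¹]`.
-/

theorem _root_.Quot.map_bijective {α β : Type*} {ra : α → α → Prop} {rb : β → β → Prop}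
    (hrb : Equivalence rb) {f : α → β} (h : ∀ ⦃a b : α⦄, ra a b → rb (f a) (f b))
    (hf_rel : ∀ ⦃a b : α⦄, rb (f a) (f b) → ra a b) (hf_surj : ∀ b, ∃ a, rb (f a) b) :
    (Quot.map f h).Bijective := by
  constructor
  · rintro ⟨a⟩ ⟨b⟩ (hab : Quot.mk rb (f a) = Quot.mk rb (f b))
    exact Quot.sound (hf_rel (hrb.eqvGen_iff.1 (Quot.eqvGen_exact hab)))
  · rintro ⟨b⟩
    obtain ⟨a, hab⟩ := hf_surj b
    exact ⟨Quot.mk _ a, Quot.sound hab⟩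

theorem mul_mul_mul_inv_eq_iff {M : Type*} [Group M] (g p x x' c q : M) :
    g * p * x' * c⁻¹ = g * x * c⁻¹ * q ↔ x' = p⁻¹ * x * (c⁻¹ * q * c) := by
  constructor
  · intro h
    calc x' = (g * p)⁻¹ * (g * p * x' * c⁻¹) * c := by group
      _ = p⁻¹ * x * (c⁻¹ * q * c) := by rw [h]; group
  · rintro rfl
    group

section

variable {G Phat Qhat Q : Subgroup Ghat} {w what : Ghat}

theorem codRel_equivalence : Equivalence (codRel G Phat Qhat Q w what) where
  refl _ := ⟨1, one_mem _, 1, one_mem _, 1, one_mem _, by simp, by simp, by simp⟩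
  symm := by
    rintro a b ⟨q, hq, qhat, hqhat, p, hp, h1, h2, h3⟩
    exact ⟨q⁻¹, inv_mem hq, qhat⁻¹, inv_mem hqhat, p⁻¹, inv_mem hp,
      by rw [h1]; group, by rw [h2]; group, by rw [h3]; group⟩
  trans := by
    rintro a b c ⟨q, hq, qhat, hqhat, p, hp, h1, h2, h3⟩ ⟨q', hq', qhat', hqhat', p', hp', h1', h2', h3'⟩
    exact ⟨q * q', mul_mem hq hq', qhat * qhat', mul_mem hqhat hqhat', p * p', mul_mem hp hp',
      by rw [h1', h1, mul_assoc], by rw [h2', h2, mul_assoc], by rw [h3', h3, mul_assoc]⟩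

variable (Qhat Q what) in
def psiRep (hw : w ∈ G) (a : Dom G Phat) : Cod G Phat Qhat Q w what :=
  ⟨(a.1.1 * a.1.2.1 * w⁻¹, a.1.1 * a.1.2.2 * what⁻¹, a.1.1), by
    obtain ⟨hg, hx, hxhat⟩ := a.2
    exact ⟨mul_mem (mul_mem hg hx.1) (inv_mem hw),
      ⟨1, one_mem _, a.1.2.1⁻¹, inv_mem hx.2, by group⟩,
      ⟨1, one_mem _, a.1.2.2⁻¹, inv_mem hxhat, by group⟩⟩⟩

theorem codRel_psiRep_of_domRel (hw : w ∈ G) {a b : Dom G Phat}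
    (h : domRel G Phat Qhat Q w what a b) :
    codRel G Phat Qhat Q w what (psiRep Qhat Q what hw a) (psiRep Qhat Q what hw b) := by
  obtain ⟨p, hp, q, ⟨-, hq⟩, qhat, ⟨-, hqhat⟩, hg, hx, hxhat⟩ := h
  refine ⟨w * q * w⁻¹, hq, what * qhat * what⁻¹, hqhat, p⁻¹, inv_mem hp.2, ?_, ?_, hg⟩ <;>
    simp only [psiRep, hg, hx, hxhat] <;> group

theorem domRel_of_codRel_psiRep (hw : w ∈ G) {a b : Dom G Phat}
    (h : codRel G Phat Qhat Q w what (psiRep Qhat Q what hw a) (psiRep Qhat Q what hw b)) :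
    domRel G Phat Qhat Q w what a b := by
  obtain ⟨⟨g, x, xhat⟩, hg, hx, hxhat⟩ := a
  obtain ⟨⟨g', x', xhat'⟩, hg', hx', hxhat'⟩ := b
  obtain ⟨q, hq, qhat, hqhat, p, hp, h1, h2, rfl : g' = g * p⟩ := h
  simp only [psiRep, mul_mul_mul_inv_eq_iff] at h1 h2
  have hpP : p ∈ G ⊓ Phat := ⟨by simpa using mul_mem (inv_mem hg) hg', hp⟩
  have hconj : w⁻¹ * q * w = x⁻¹ * p * x' := by rw [h1]; group
  have hconjhat : what⁻¹ * qhat * what = xhat⁻¹ * p * xhat' := by rw [h2]; group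
  refine ⟨p⁻¹, inv_mem hpP,
    w⁻¹ * q * w, ⟨hconj ▸ mul_mem (mul_mem (inv_mem hx) hpP) hx', by simpa [mul_assoc] using hq⟩,
    what⁻¹ * qhat * what,
      ⟨hconjhat ▸ mul_mem (mul_mem (inv_mem hxhat) hp) hxhat', by simpa [mul_assoc] using hqhat⟩,
    by group, h1, h2⟩

theorem exists_codRel_psiRep (hQG : Q ≤ G) (hw : w ∈ G) (c : Cod G Phat Qhat Q w what) :
    ∃ a, codRel G Phat Qhat Q w what (psiRep Qhat Q what hw a) c := by
  obtain ⟨⟨g, ghat, z⟩, hg, ⟨q, hq, p, hp, hz⟩, ⟨qhat, hqhat, phat, hphat, hzhat⟩⟩ := c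
  refine ⟨⟨(g * q * w, 1, p * phat⁻¹), mul_mem (mul_mem hg (hQG hq)) hw, one_mem _,
    mul_mem hp (inv_mem hphat)⟩, q⁻¹, inv_mem hq, qhat⁻¹, inv_mem hqhat, p, hp, ?_, ?_, ?_⟩
  · simp only [psiRep]; group
  · calc ghat = ghat * qhat * what * phat * phat⁻¹ * what⁻¹ * qhat⁻¹ := by group
      _ = g * q * w * (p * phat⁻¹) * what⁻¹ * qhat⁻¹ := by rw [← hzhat, hz]; group
  · exact hz

end

/-- `ψ : G ×_P 𝒫 → 𝒴′`, `[g, p̄, phatbar] ↦ (gpw⁻¹Q, gphatwhat⁻¹Qhat, gPhat)`, is a well-defined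
bijection. -/
theorem psi_well_defined_bijection (G Phat Qhat Q : Subgroup Ghat) (hQG : Q ≤ G)
    (w what : Ghat) (hw : w ∈ G) :
    ∃ ψ : Quot (domRel G Phat Qhat Q w what) → Quot (codRel G Phat Qhat Q w what),
      Function.Bijective ψ ∧
      ∀ a : Dom G Phat, ∃ h,
        ψ (Quot.mk _ a) =
          Quot.mk _ ⟨(a.1.1 * a.1.2.1 * w⁻¹, a.1.1 * a.1.2.2 * what⁻¹, a.1.1), h⟩ :=
  ⟨Quot.map (psiRep Qhat Q what hw) fun _ _ => codRel_psiRep_of_domRel hw,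
    Quot.map_bijective codRel_equivalence _ (fun _ _ => domRel_of_codRel_psiRep hw)
      (exists_codRel_psiRep hQG hw),
    fun a => ⟨(psiRep Qhat Q what hw a).2, rfl⟩⟩

end Stmt0
end

section
/- The map η : G ×_P 𝒞₀ → 𝒞 sending the class [g, p(w⁻¹Bw ∩ P), p̂(ŵ⁻¹B̂ŵ ∩ P̂)] to the triple (gpw⁻¹B, gp̂ŵ⁻¹B̂, gP̂) is a well-defined bijection. -/
/-!
STATEMENT 1: Let `Ghat` be a group with subgroups `G, Phat, Bhat ≤ Ghat`, `P = G ∩ Phat`, `B ≤ G`,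
and fixed `w ∈ G`, `what ∈ Ghat`.  With `G ×_P 𝒞₀` the quotient of
`G × (P/(w⁻¹Bw ∩ P)) × (Phat/(what⁻¹Bhatwhat ∩ Phat))` by the `P`-action
`p·(g, x, xhat) = (gp⁻¹, px, pxhat)`, and `𝒞 ⊆ (G/B) × (Ghat/Bhat) × (Ghat/Phat)` the set of
triples `(gB, ghatBhat, zPhat)` with `z ∈ gBwPhat` and `z ∈ ghatBhatwhatPhat`:
the map `η : G ×_P 𝒞₀ → 𝒞`,
`[g, p(w⁻¹Bw ∩ P), phat(what⁻¹Bhatwhat ∩ Phat)] ↦ (gpw⁻¹B, gphatwhat⁻¹Bhat, gPhat)`,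
is a well-defined bijection.
-/

namespace Stmt1

variable {Ghat : Type*} [Group Ghat]

/-- Triples `(g, x, xhat)` with `g ∈ G`, `x ∈ P = G ⊓ Phat`, `xhat ∈ Phat`; such a triple
represents the point `[g, x·(w⁻¹Bw ∩ P), xhat·(what⁻¹Bhatwhat ∩ Phat)]` of `G ×_P 𝒞₀`. -/
abbrev Dom (G Phat : Subgroup Ghat) : Type _ :=
  {t : Ghat × Ghat × Ghat // t.1 ∈ G ∧ t.2.1 ∈ G ⊓ Phat ∧ t.2.2 ∈ Phat}

/-- Two triples represent the same point of `G ×_P 𝒞₀` iff they differ by the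
`P`-action `p·(g, x, xhat) = (gp⁻¹, px, pxhat)` combined with the right-coset ambiguity by
`w⁻¹Bw ∩ P` and `what⁻¹Bhatwhat ∩ Phat`; so `G ×_P 𝒞₀ = Quot (domRel G Phat Bhat B w what)`. -/
def domRel (G Phat Bhat B : Subgroup Ghat) (w what : Ghat) (a b : Dom G Phat) : Prop :=
  ∃ p ∈ G ⊓ Phat, ∃ q, (q ∈ G ⊓ Phat ∧ w * q * w⁻¹ ∈ B) ∧
    ∃ qhat, (qhat ∈ Phat ∧ what * qhat * what⁻¹ ∈ Bhat) ∧
      b.1.1 = a.1.1 * p⁻¹ ∧ b.1.2.1 = p * a.1.2.1 * q ∧ b.1.2.2 = p * a.1.2.2 * qhat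

/-- Triples `(g, ghat, z)` with `g ∈ G`, `z ∈ gBwPhat` and `z ∈ ghatBhatwhatPhat`, representing the
point `(gB, ghatBhat, zPhat)` of `𝒞` (the defining conditions do not depend on the chosen
coset representatives). -/
abbrev Cod (G Phat Bhat B : Subgroup Ghat) (w what : Ghat) : Type _ :=
  {t : Ghat × Ghat × Ghat // t.1 ∈ G ∧
    (∃ q ∈ B, ∃ p ∈ Phat, t.2.2 = t.1 * q * w * p) ∧
    (∃ qhat ∈ Bhat, ∃ phat ∈ Phat, t.2.2 = t.2.1 * qhat * what * phat)}

/-- Two triples represent the same point of `𝒞` iff the components differ on the right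
by elements of `B`, `Bhat`, `Phat` respectively; so `𝒞 = Quot (codRel G Phat Bhat B w what)`. -/
def codRel (G Phat Bhat B : Subgroup Ghat) (w what : Ghat) (a b : Cod G Phat Bhat B w what) : Prop :=
  ∃ q ∈ B, ∃ qhat ∈ Bhat, ∃ p ∈ Phat,
    b.1.1 = a.1.1 * q ∧ b.1.2.1 = a.1.2.1 * qhat ∧ b.1.2.2 = a.1.2.2 * p

/- The representative map `(g, x, x̂) ↦ (g x w⁻¹, g x̂ ŵ⁻¹, g)` turns the action of `p ∈ P` into
right translation of the last coordinate by `p⁻¹ ∈ P̂`, and right translation by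
`c ∈ w⁻¹Bw ∩ P` (resp. `ĉ ∈ ŵ⁻¹B̂ŵ ∩ P̂`) into right translation by `w c w⁻¹ ∈ B`
(resp. `ŵ ĉ ŵ⁻¹ ∈ B̂`), so it descends to the quotients. Conversely, the last coordinate
determines `p`, and then conjugating back by `w`, `ŵ` recovers `c`, `ĉ`; this gives injectivity.
For surjectivity, a point with `z = g b w p = ĝ b̂ ŵ p̂` is the image of `[g b w, 1, p p̂⁻¹]`,
where `B ≤ G` puts `g b w` in `G`. -/

theorem eq_inv_mul_mul_conj_of_mul_eq {α : Type*} [Group α] {g p x y w q : α}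
    (h : g * p * x * w⁻¹ = g * y * w⁻¹ * q) : x = p⁻¹ * y * (w⁻¹ * q * w) :=
  calc x = (g * p)⁻¹ * (g * p * x * w⁻¹) * w := by group
    _ = p⁻¹ * y * (w⁻¹ * q * w) := by rw [h]; group

section

variable {G Phat Bhat B : Subgroup Ghat} {w what : Ghat}

def toCod (hw : w ∈ G) (a : Dom G Phat) : Cod G Phat Bhat B w what :=
  ⟨(a.1.1 * a.1.2.1 * w⁻¹, a.1.1 * a.1.2.2 * what⁻¹, a.1.1),
    mul_mem (mul_mem a.2.1 (Subgroup.mem_inf.mp a.2.2.1).1) (inv_mem hw),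
    ⟨1, one_mem _, a.1.2.1⁻¹, inv_mem (Subgroup.mem_inf.mp a.2.2.1).2, by group⟩,
    ⟨1, one_mem _, a.1.2.2⁻¹, inv_mem a.2.2.2, by group⟩⟩

theorem codRel_equivalence : Equivalence (codRel G Phat Bhat B w what) where
  refl _ := ⟨1, one_mem _, 1, one_mem _, 1, one_mem _, by group, by group, by group⟩
  symm := by
    rintro a b ⟨q, hq, qhat, hqhat, p, hp, h₁, h₂, h₃⟩
    exact ⟨q⁻¹, inv_mem hq, qhat⁻¹, inv_mem hqhat, p⁻¹, inv_mem hp,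
      by rw [h₁]; group, by rw [h₂]; group, by rw [h₃]; group⟩
  trans := by
    rintro a b c ⟨q, hq, qhat, hqhat, p, hp, h₁, h₂, h₃⟩
      ⟨q', hq', qhat', hqhat', p', hp', h₁', h₂', h₃'⟩
    exact ⟨q * q', mul_mem hq hq', qhat * qhat', mul_mem hqhat hqhat', p * p', mul_mem hp hp',
      by rw [h₁', h₁]; group, by rw [h₂', h₂]; group, by rw [h₃', h₃]; group⟩

theorem codRel_toCod_of_domRel (hw : w ∈ G) {a b : Dom G Phat}
    (hab : domRel G Phat Bhat B w what a b) :
    codRel G Phat Bhat B w what (toCod hw a) (toCod hw b) := by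
  obtain ⟨p, hp, q, ⟨-, hqB⟩, qhat, ⟨-, hqhatB⟩, h₁, h₂, h₃⟩ := hab
  refine ⟨w * q * w⁻¹, hqB, what * qhat * what⁻¹, hqhatB, p⁻¹, inv_mem hp.2, ?_, ?_, h₁⟩
  · change b.1.1 * b.1.2.1 * w⁻¹ = a.1.1 * a.1.2.1 * w⁻¹ * (w * q * w⁻¹)
    rw [h₁, h₂]; group
  · change b.1.1 * b.1.2.2 * what⁻¹ = a.1.1 * a.1.2.2 * what⁻¹ * (what * qhat * what⁻¹)
    rw [h₁, h₃]; group

theorem domRel_of_codRel_toCod (hw : w ∈ G) {a b : Dom G Phat}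
    (h : codRel G Phat Bhat B w what (toCod hw a) (toCod hw b)) :
    domRel G Phat Bhat B w what a b := by
  obtain ⟨q, hq, qhat, hqhat, p, hp, h₁, h₂, h₃⟩ := h
  change b.1.1 = a.1.1 * p at h₃
  change b.1.1 * b.1.2.1 * w⁻¹ = a.1.1 * a.1.2.1 * w⁻¹ * q at h₁
  change b.1.1 * b.1.2.2 * what⁻¹ = a.1.1 * a.1.2.2 * what⁻¹ * qhat at h₂
  rw [h₃] at h₁ h₂
  have hpG : p ∈ G := by
    simpa [h₃] using mul_mem (inv_mem a.2.1) b.2.1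
  have hpP : p ∈ G ⊓ Phat := ⟨hpG, hp⟩
  have hx := eq_inv_mul_mul_conj_of_mul_eq h₁
  have hxhat := eq_inv_mul_mul_conj_of_mul_eq h₂
  have hc : w⁻¹ * q * w ∈ G ⊓ Phat := by
    have e : w⁻¹ * q * w = a.1.2.1⁻¹ * p * b.1.2.1 := by rw [hx]; group
    exact e ▸ mul_mem (mul_mem (inv_mem a.2.2.1) hpP) b.2.2.1
  have hchat : what⁻¹ * qhat * what ∈ Phat := by
    have e : what⁻¹ * qhat * what = a.1.2.2⁻¹ * p * b.1.2.2 := by rw [hxhat]; group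
    exact e ▸ mul_mem (mul_mem (inv_mem a.2.2.2) hp) b.2.2.2
  refine ⟨p⁻¹, inv_mem hpP, w⁻¹ * q * w, ⟨hc, by simpa [mul_assoc] using hq⟩,
    what⁻¹ * qhat * what, ⟨hchat, by simpa [mul_assoc] using hqhat⟩, by rw [h₃]; group, hx, hxhat⟩

theorem exists_codRel_toCod (hBG : B ≤ G) (hw : w ∈ G) (c : Cod G Phat Bhat B w what) :
    ∃ a : Dom G Phat, codRel G Phat Bhat B w what (toCod hw a) c := by
  obtain ⟨⟨g, ghat, z⟩, hg, ⟨q, hq, p, hp, hz⟩, ⟨qhat, hqhat, phat, hphat, hzhat⟩⟩ := c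
  refine ⟨⟨(g * q * w, 1, p * phat⁻¹), mul_mem (mul_mem hg (hBG hq)) hw, one_mem _,
    mul_mem hp (inv_mem hphat)⟩, q⁻¹, inv_mem hq, qhat⁻¹, inv_mem hqhat, p, hp, ?_, ?_, hz⟩
  · change g = g * q * w * 1 * w⁻¹ * q⁻¹
    group
  · change ghat = g * q * w * (p * phat⁻¹) * what⁻¹ * qhat⁻¹
    calc ghat = ghat * qhat * what * phat * (phat⁻¹ * what⁻¹ * qhat⁻¹) := by group
      _ = g * q * w * (p * phat⁻¹) * what⁻¹ * qhat⁻¹ := by rw [← hzhat, hz]; group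

end

/-- `η : G ×_P 𝒞₀ → 𝒞`, `[g, p̄, phatbar] ↦ (gpw⁻¹B, gphatwhat⁻¹Bhat, gPhat)`, is a well-defined
bijection. -/
theorem eta_well_defined_bijection (G Phat Bhat B : Subgroup Ghat) (hBG : B ≤ G)
    (w what : Ghat) (hw : w ∈ G) :
    ∃ η : Quot (domRel G Phat Bhat B w what) → Quot (codRel G Phat Bhat B w what),
      Function.Bijective η ∧
      ∀ a : Dom G Phat, ∃ h,
        η (Quot.mk _ a) =
          Quot.mk _ ⟨(a.1.1 * a.1.2.1 * w⁻¹, a.1.1 * a.1.2.2 * what⁻¹, a.1.1), h⟩ := by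
  refine ⟨Quot.map (toCod hw) fun _ _ => codRel_toCod_of_domRel hw, ⟨?_, ?_⟩, fun _ => ⟨_, rfl⟩⟩
  · rintro ⟨a⟩ ⟨b⟩ h
    exact Quot.sound <| domRel_of_codRel_toCod hw <|
      codRel_equivalence.eqvGen_iff.mp (Quot.eqvGen_exact h)
  · rintro ⟨c⟩
    obtain ⟨a, ha⟩ := exists_codRel_toCod hBG hw c
    exact ⟨Quot.mk _ a, Quot.sound ha⟩

end Stmt1
end

section
/- Let δ ∈ V, and suppose v ∈ W is such that vδ is dominant and v has minimal length among all elements u ∈ W with uδ dominant. Then for every positive root γ with (γ, δ) ≥ 0, the root vγ is positive. -/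
/-!
STATEMENT 3: Let `Φ` be a finite reduced crystallographic root system spanning a real
inner product space `V` whose Weyl group preserves the inner product, with positive roots
`Φ⁺`, simple roots `Δ`, and length function `ℓ`.  Let `δ ∈ V`, and suppose `v ∈ W` is such
that `vδ` is dominant and `v` has minimal length among all elements `u ∈ W` with `uδ`
dominant.  Then for every positive root `γ` with `(γ, δ) ≥ 0`, the root `vγ` is positive.
-/

open scoped RealInnerProductSpace

namespace Stmt3

noncomputable section

/-- Data of a finite reduced crystallographic root system `Φ` spanning the real inner
product space `V`, together with a choice of positive roots `Pos` (so `Φ = Pos ⊔ -Pos`)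
and the corresponding simple roots `Δ` (a linearly independent set of positive roots such
that every positive root is a nonnegative linear combination of elements of `Δ`). -/
structure RootSystemData (V : Type*) [NormedAddCommGroup V] [InnerProductSpace ℝ V] where
  Φ : Set V
  Pos : Set V
  Δ : Set V
  finite : Φ.Finite
  nonzero : ∀ α ∈ Φ, α ≠ 0
  spans : Submodule.span ℝ Φ = ⊤
  neg_mem : ∀ α ∈ Φ, -α ∈ Φ
  reduced : ∀ α ∈ Φ, ∀ t : ℝ, t • α ∈ Φ → t = 1 ∨ t = -1
  crystallographic : ∀ α ∈ Φ, ∀ β ∈ Φ, ∃ n : ℤ, 2 * ⟪β, α⟫ / ⟪α, α⟫ = (n : ℝ)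
  reflect_mem : ∀ α ∈ Φ, ∀ β ∈ Φ, β - (2 * ⟪β, α⟫ / ⟪α, α⟫) • α ∈ Φ
  pos_sub : Pos ⊆ Φ
  pos_iff : ∀ α ∈ Φ, (α ∈ Pos ↔ -α ∉ Pos)
  simple_sub : Δ ⊆ Pos
  simple_indep : LinearIndependent ℝ (fun a : Δ => (a : V))
  simple_gen : ∀ α ∈ Pos, ∃ c : V →₀ ℝ, ↑c.support ⊆ Δ ∧ (∀ β, 0 ≤ c β) ∧
    α = c.sum fun β r => r • β

variable {V : Type*} [NormedAddCommGroup V] [InnerProductSpace ℝ V] [FiniteDimensional ℝ V]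

/-- The orthogonal reflection `s_α` in the hyperplane orthogonal to `α`. -/
def sref (α : V) : V ≃ₗᵢ[ℝ] V := Submodule.reflection (Submodule.span ℝ {α})ᗮ

/-- The Weyl group `W`, generated by the reflections in the simple roots (a group of
linear isometries of `V`, so it preserves the inner product). -/
def Weyl (D : RootSystemData V) : Subgroup (V ≃ₗᵢ[ℝ] V) :=
  Subgroup.closure (sref '' D.Δ)

/-- The length function `ℓ` on `W` with respect to the simple reflections:
the least length of an expression as a product of simple reflections. -/
def len (D : RootSystemData V) (u : V ≃ₗᵢ[ℝ] V) : ℕ :=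
  sInf {n | ∃ l : List (V ≃ₗᵢ[ℝ] V), l.length = n ∧ (∀ s ∈ l, s ∈ sref '' D.Δ) ∧ l.prod = u}

/-- An element `δ ∈ V` is dominant if `(α, δ) ≥ 0` for all simple roots `α`. -/
def IsDominant (D : RootSystemData V) (δ : V) : Prop := ∀ α ∈ D.Δ, 0 ≤ ⟪α, δ⟫

section Aux

variable (D : RootSystemData V)

lemma sref_apply (α β : V) (hα : α ≠ 0) :
    sref α β = β - (2 * ⟪β, α⟫ / ⟪α, α⟫) • α := by
  have h0 : (⟪α, α⟫ : ℝ) ≠ 0 := inner_self_ne_zero.mpr hα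
  set t : ℝ := ⟪α, β⟫ / ⟪α, α⟫ with ht
  have h1 : β - t • α ∈ (Submodule.span ℝ {α})ᗮ := by
    rw [Submodule.mem_orthogonal_singleton_iff_inner_right, inner_sub_right,
      real_inner_smul_right, ht, div_mul_cancel₀ _ h0, sub_self]
  have h2 : t • α ∈ ((Submodule.span ℝ {α})ᗮ)ᗮ := by
    rw [Submodule.orthogonal_orthogonal]
    exact Submodule.smul_mem _ _ (Submodule.mem_span_singleton_self α)
  have hk : 2 * ⟪β, α⟫ / ⟪α, α⟫ = t + t := by
    rw [ht, real_inner_comm β α]; ring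
  calc sref α β = sref α ((β - t • α) + t • α) := by rw [sub_add_cancel]
    _ = sref α (β - t • α) + sref α (t • α) := map_add _ _ _
    _ = (β - t • α) + -(t • α) := by
        unfold sref
        rw [Submodule.reflection_mem_subspace_eq_self h1,
          Submodule.reflection_mem_subspace_orthogonalComplement_eq_neg h2]
    _ = β - (2 * ⟪β, α⟫ / ⟪α, α⟫) • α := by rw [hk, add_smul]; abel

lemma sref_mul_self (α : V) : sref α * sref α = 1 := by
  apply LinearIsometryEquiv.ext
  intro x
  simp only [LinearIsometryEquiv.coe_mul, Function.comp_apply, LinearIsometryEquiv.coe_one,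
    id_eq]
  exact Submodule.reflection_reflection _ x

lemma sref_inv (α : V) : (sref α)⁻¹ = sref α :=
  inv_eq_of_mul_eq_one_right (sref_mul_self α)

lemma sref_mem_phi {α β : V} (hα : α ∈ D.Φ) (hβ : β ∈ D.Φ) : sref α β ∈ D.Φ := by
  rw [sref_apply α β (D.nonzero α hα)]
  exact D.reflect_mem α hα β hβ

lemma weyl_mem_phi {w : V ≃ₗᵢ[ℝ] V} (hw : w ∈ Weyl D) (β : V) (hβ : β ∈ D.Φ) :
    w β ∈ D.Φ := by
  replace hw : w ∈ Subgroup.closure (sref '' D.Δ) := hw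
  have key : (∀ β ∈ D.Φ, w β ∈ D.Φ) ∧ (∀ β ∈ D.Φ, w⁻¹ β ∈ D.Φ) := by
    induction hw using Subgroup.closure_induction with
    | mem x hx =>
      obtain ⟨a, ha, rfl⟩ := hx
      have h : ∀ β ∈ D.Φ, sref a β ∈ D.Φ :=
        fun β hβ => sref_mem_phi D (D.pos_sub (D.simple_sub ha)) hβ
      exact ⟨h, by rw [sref_inv]; exact h⟩
    | one => simp
    | mul x y hx hy ihx ihy =>
      refine ⟨fun β hβ => ?_, fun β hβ => ?_⟩
      · have : (x * y) β = x (y β) := rfl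
        rw [this]; exact ihx.1 _ (ihy.1 _ hβ)
      · have : (x * y)⁻¹ β = y⁻¹ (x⁻¹ β) := by rw [mul_inv_rev]; rfl
        rw [this]; exact ihy.2 _ (ihx.2 _ hβ)
    | inv x hx ih => exact ⟨ih.2, by rw [inv_inv]; exact ih.1⟩
  exact key.1 β hβ

lemma inner_pos_nonneg {x : V} (hx : IsDominant D x) {β : V} (hβ : β ∈ D.Pos) :
    0 ≤ ⟪β, x⟫ := by
  obtain ⟨c, hsupp, hnn, hβeq⟩ := D.simple_gen β hβ
  rw [hβeq, Finsupp.sum, sum_inner]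
  refine Finset.sum_nonneg fun i hi => ?_
  rw [real_inner_smul_left]
  exact mul_nonneg (hnn i) (hx i (hsupp hi))

lemma coeffs_zero {c : V →₀ ℝ} (hsupp : ↑c.support ⊆ D.Δ)
    (h : (Finsupp.linearCombination ℝ (id : V → V)) c = 0) : c = 0 :=
  linearIndepOn_iff.mp (linearIndependent_subtype_iff.mp D.simple_indep) c ((Finsupp.mem_supported ℝ c).mpr hsupp) h

lemma simple_sref_pos {α β : V} (hα : α ∈ D.Δ) (hβ : β ∈ D.Pos)
    (h : sref α β ∉ D.Pos) : β = α := by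
  classical
  have hαΦ : α ∈ D.Φ := D.pos_sub (D.simple_sub hα)
  have hβΦ : β ∈ D.Φ := D.pos_sub hβ
  have hα0 : α ≠ 0 := D.nonzero α hαΦ
  have hsΦ : sref α β ∈ D.Φ := sref_mem_phi D hαΦ hβΦ
  have hneg : -(sref α β) ∈ D.Pos := by
    by_contra hc
    exact h ((D.pos_iff _ hsΦ).mpr hc)
  obtain ⟨c, hcs, hcn, hcβ⟩ := D.simple_gen β hβ
  obtain ⟨d, hds, hdn, hdβ⟩ := D.simple_gen _ hneg
  set k : ℝ := 2 * ⟪β, α⟫ / ⟪α, α⟫ with hk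
  have hsr : sref α β = β - k • α := sref_apply α β hα0
  set T := Finsupp.linearCombination ℝ (id : V → V) with hT
  have hTc : T c = β := by rw [hT, Finsupp.linearCombination_apply]; exact hcβ.symm
  have hTd : T d = -(sref α β) := by rw [hT, Finsupp.linearCombination_apply]; exact hdβ.symm
  have hTe : T (c + d - Finsupp.single α k) = 0 := by
    rw [map_sub, map_add, hTc, hTd, Finsupp.linearCombination_single, hsr, id]
    abel
  have hse : ↑(c + d - Finsupp.single α k).support ⊆ D.Δ := by
    intro x hx
    have hx' : x ∈ (c + d).support ∪ (Finsupp.single α k).support :=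
      Finsupp.support_sub (Finset.mem_coe.mp hx)
    rcases Finset.mem_union.mp hx' with h' | h'
    · rcases Finset.mem_union.mp (Finsupp.support_add h') with h'' | h''
      · exact hcs h''
      · exact hds h''
    · have : x = α := by
        have := Finsupp.support_single_subset h'
        simpa using this
      exact this ▸ hα
  have he : c + d - Finsupp.single α k = 0 := coeffs_zero D hse hTe
  have hco : ∀ x : V, x ≠ α → c x = 0 := by
    intro x hx
    have h0 := DFunLike.congr_fun he x
    rw [Finsupp.sub_apply, Finsupp.add_apply, Finsupp.single_apply, if_neg (Ne.symm hx),
      Finsupp.coe_zero, Pi.zero_apply, sub_zero] at h0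
    have := hcn x
    have := hdn x
    linarith
  have hcsingle : c = Finsupp.single α (c α) := by
    ext x
    rcases eq_or_ne x α with rfl | hx
    · simp
    · rw [Finsupp.single_apply, if_neg (Ne.symm hx)]
      exact hco x hx
  obtain ⟨r, hr⟩ : ∃ r : ℝ, c = Finsupp.single α r := ⟨c α, hcsingle⟩
  have hc1 : β = r • α := by
    rw [← hTc, hr, Finsupp.linearCombination_single]; rfl
  rcases D.reduced α hαΦ r (by rw [← hc1]; exact hβΦ) with h1 | h1
  · rw [hc1, h1, one_smul]
  · exfalso
    have hβα : β = -α := by rw [hc1, h1, neg_smul, one_smul]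
    exact ((D.pos_iff α hαΦ).mp (D.simple_sub hα)) (hβα ▸ hβ)

lemma prod_mem_weyl {l : List (V ≃ₗᵢ[ℝ] V)} (hl : ∀ s ∈ l, s ∈ sref '' D.Δ) :
    l.prod ∈ Weyl D :=
  Subgroup.list_prod_mem _ fun x hx => Subgroup.subset_closure (hl x hx)

lemma exists_split :
    ∀ (l : List (V ≃ₗᵢ[ℝ] V)), (∀ s ∈ l, s ∈ sref '' D.Δ) →
    ∀ γ ∈ D.Pos, l.prod γ ∉ D.Pos →
    ∃ (l₁ : List (V ≃ₗᵢ[ℝ] V)) (α : V) (l₂ : List (V ≃ₗᵢ[ℝ] V)),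
      α ∈ D.Δ ∧ l = l₁ ++ sref α :: l₂ ∧ l₂.prod γ = α := by
  intro l
  induction l with
  | nil =>
    intro _ γ hγ h
    exact absurd (by simpa using hγ) h
  | cons s l ih =>
    intro hl γ hγ h
    by_cases hp : l.prod γ ∈ D.Pos
    · obtain ⟨a, ha, hsa⟩ := hl s List.mem_cons_self
      refine ⟨[], a, l, ha, by rw [← hsa]; rfl, ?_⟩
      refine simple_sref_pos D ha hp ?_
      intro hc
      apply h
      have : (s :: l).prod γ = sref a (l.prod γ) := by
        rw [List.prod_cons, ← hsa]; rfl
      rwa [this]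
    · obtain ⟨l₁, a, l₂, ha, heq, hpr⟩ :=
        ih (fun x hx => hl x (List.mem_cons_of_mem s hx)) γ hγ hp
      exact ⟨s :: l₁, a, l₂, ha, by rw [heq]; rfl, hpr⟩

lemma sref_conj (u : V ≃ₗᵢ[ℝ] V) {γ : V} (hγ : γ ≠ 0) :
    sref (u γ) = u * sref γ * u⁻¹ := by
  have huγ : u γ ≠ 0 := fun h => hγ (u.injective (by rw [h, map_zero]))
  apply LinearIsometryEquiv.ext
  intro x
  have h1 : (u * sref γ * u⁻¹) x = u (sref γ (u.symm x)) := rfl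
  have h2 : u (u.symm x) = x := u.apply_symm_apply x
  have e1 : (⟪x, u γ⟫ : ℝ) = ⟪u.symm x, γ⟫ := by
    rw [← u.inner_map_map (u.symm x) γ, h2]
  have e2 : (⟪u γ, u γ⟫ : ℝ) = ⟪γ, γ⟫ := u.inner_map_map γ γ
  rw [sref_apply _ x huγ, h1, sref_apply γ (u.symm x) hγ, map_sub,
    LinearIsometryEquiv.map_smul, h2, e1, e2]

lemma exists_list {w : V ≃ₗᵢ[ℝ] V} (hw : w ∈ Weyl D) :
    ∃ l : List (V ≃ₗᵢ[ℝ] V), (∀ s ∈ l, s ∈ sref '' D.Δ) ∧ l.prod = w := by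
  replace hw : w ∈ Subgroup.closure (sref '' D.Δ) := hw
  induction hw using Subgroup.closure_induction with
  | mem x hx =>
    exact ⟨[x], fun s hs => (List.mem_singleton.mp hs) ▸ hx, by simp⟩
  | one => exact ⟨[], by simp, by simp⟩
  | mul x y hx hy ihx ihy =>
    obtain ⟨l1, h1, e1⟩ := ihx
    obtain ⟨l2, h2, e2⟩ := ihy
    refine ⟨l1 ++ l2, fun s hs => ?_, by rw [List.prod_append, e1, e2]⟩
    rcases List.mem_append.mp hs with h | h
    exacts [h1 s h, h2 s h]
  | inv x hx ih =>
    obtain ⟨l, h, e⟩ := ih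
    refine ⟨(l.map (·⁻¹)).reverse, ?_, by rw [← List.prod_inv_reverse, e]⟩
    intro s hs
    rw [List.mem_reverse, List.mem_map] at hs
    obtain ⟨t, ht, rfl⟩ := hs
    obtain ⟨a, ha, rfl⟩ := h t ht
    rw [sref_inv]
    exact ⟨a, ha, rfl⟩

end Aux

/-- If `vδ` is dominant and `v` has minimal length among all `u ∈ W` with `uδ` dominant,
then `v` sends every positive root pairing nonnegatively with `δ` to a positive root. -/
theorem pos_of_min_length_dominant (D : RootSystemData V) (δ : V)
    (v : V ≃ₗᵢ[ℝ] V) (hvW : v ∈ Weyl D)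
    (hdom : IsDominant D (v δ))
    (hmin : ∀ u : V ≃ₗᵢ[ℝ] V, u ∈ Weyl D → IsDominant D (u δ) → len D v ≤ len D u)
    (γ : V) (hγ : γ ∈ D.Pos) (hγδ : 0 ≤ ⟪γ, δ⟫) :
    v γ ∈ D.Pos := by
  by_contra hneg
  have hγΦ : γ ∈ D.Φ := D.pos_sub hγ
  have hγ0 : γ ≠ 0 := D.nonzero γ hγΦ
  have hvγΦ : v γ ∈ D.Φ := weyl_mem_phi D hvW γ hγΦ
  have hvneg : -(v γ) ∈ D.Pos := by
    by_contra hc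
    exact hneg ((D.pos_iff _ hvγΦ).mpr hc)
  have hzero : ⟪γ, δ⟫ = 0 := by
    have h1 : 0 ≤ ⟪-(v γ), v δ⟫ := inner_pos_nonneg D hdom hvneg
    rw [inner_neg_left] at h1
    have h2 : ⟪v γ, v δ⟫ = ⟪γ, δ⟫ := v.inner_map_map γ δ
    linarith
  have hfix : sref γ δ = δ := by
    rw [sref_apply γ δ hγ0, real_inner_comm γ δ, hzero]
    simp
  have hne : {n | ∃ l : List (V ≃ₗᵢ[ℝ] V), l.length = n ∧ (∀ s ∈ l, s ∈ sref '' D.Δ) ∧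
      l.prod = v}.Nonempty := by
    obtain ⟨l, hl, he⟩ := exists_list D hvW
    exact ⟨l.length, l, rfl, hl, he⟩
  have hmem : len D v ∈ {n | ∃ l : List (V ≃ₗᵢ[ℝ] V), l.length = n ∧
      (∀ s ∈ l, s ∈ sref '' D.Δ) ∧ l.prod = v} := Nat.sInf_mem hne
  obtain ⟨l, hlen, hl, hprod⟩ := hmem
  have hnp : l.prod γ ∉ D.Pos := by rw [hprod]; exact hneg
  obtain ⟨l₁, α, l₂, hα, heq, huγ⟩ := exists_split D l hl γ hγ hnp
  have hconj : sref α = l₂.prod * sref γ * (l₂.prod)⁻¹ := by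
    rw [← huγ]; exact sref_conj l₂.prod hγ0
  have hv2 : v = l₁.prod * l₂.prod * sref γ := by
    rw [← hprod, heq, List.prod_append, List.prod_cons, hconj]
    group
  have hvs : v * sref γ = (l₁ ++ l₂).prod := by
    rw [List.prod_append, hv2, mul_assoc, mul_assoc, sref_mul_self, mul_one]
  have hmem12 : ∀ s ∈ l₁ ++ l₂, s ∈ sref '' D.Δ := by
    intro s hs
    apply hl
    rw [heq]
    rcases List.mem_append.mp hs with h | h
    · exact List.mem_append.mpr (Or.inl h)
    · exact List.mem_append.mpr (Or.inr (List.mem_cons_of_mem _ h))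
  have hW' : v * sref γ ∈ Weyl D := by
    rw [hvs]; exact prod_mem_weyl D hmem12
  have hdom' : IsDominant D ((v * sref γ) δ) := by
    have h : (v * sref γ) δ = v δ := by
      have : (v * sref γ) δ = v (sref γ δ) := rfl
      rw [this, hfix]
    rw [h]; exact hdom
  have hlenle : len D (v * sref γ) ≤ l₁.length + l₂.length :=
    Nat.sInf_le ⟨l₁ ++ l₂, by simp, hmem12, hvs.symm⟩
  have hmin' := hmin _ hW' hdom'
  have hlv : len D v = l₁.length + 1 + l₂.length := by
    rw [← hlen, heq]
    simp [List.length_append]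
    try omega
  omega

end

end Stmt3
end
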